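/- arXiv:1301.2942 — 2 statements merged into one kernel-verified Lean document; each statement's English description precedes it below -/
import Mathlib

section
/- Let n ≥ 2 and let (σ_H, g, σ′) and (σ_H′, g′, σ″) be admissible triples, with associated multipliers σ_n(a′b, ab′) = σ_H(a′, α_b(a)) g(a,b) σ′(b,b′) and σ_n′(a′b, ab′) = σ_H′(a′, α_b(a)) g′(a,b) σ″(b,b′) of G(n). Then σ_n and σ_n′ are similar if and only if both of the following hold: (i) σ′ and σ″ are similar multipliers of G(n−1); (ii) there exists β : H(n) → 𝕋 such that σ_H′(a,a′) = β(a)⁻¹ β(a′)⁻¹ β(a+a′) σ_H(a,a′) and g′(a,b) = β(α_b(a)) β(a)⁻¹ g(a,b) for all a, a′ ∈ H(n) and b ∈ G(n−1). -/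
open scoped BigOperators

namespace FreeNilp

/-- Index set for pairs `(j,k)` with `j < k`. -/
abbrev PairIdx (n : ℕ) : Type := {p : Fin n × Fin n // p.1 < p.2}

/-- The free nilpotent group of class 2 and rank `n`, realized on
`ℤ^n × ℤ^{n(n-1)/2}`. -/
@[ext] structure G (n : ℕ) where
  u : Fin n → ℤ
  v : PairIdx n → ℤ

namespace G

instance (n : ℕ) : Group (G n) where
  mul r s := ⟨fun i => r.u i + s.u i, fun p => r.v p + s.v p + r.u p.1.1 * s.u p.1.2⟩
  one := ⟨fun _ => 0, fun _ => 0⟩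
  inv r := ⟨fun i => -r.u i, fun p => -r.v p + r.u p.1.1 * r.u p.1.2⟩
  mul_assoc r s t := by
    refine G.ext ?_ ?_ <;> funext x
    · show (r.u x + s.u x) + t.u x = r.u x + (s.u x + t.u x)
      ring
    · show (r.v x + s.v x + r.u x.1.1 * s.u x.1.2) + t.v x +
          (r.u x.1.1 + s.u x.1.1) * t.u x.1.2 =
        r.v x + (s.v x + t.v x + s.u x.1.1 * t.u x.1.2) +
          r.u x.1.1 * (s.u x.1.2 + t.u x.1.2)
      ring
  one_mul r := by
    refine G.ext ?_ ?_ <;> funext x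
    · show 0 + r.u x = r.u x
      ring
    · show 0 + r.v x + 0 * r.u x.1.2 = r.v x
      ring
  mul_one r := by
    refine G.ext ?_ ?_ <;> funext x
    · show r.u x + 0 = r.u x
      ring
    · show r.v x + 0 + r.u x.1.1 * 0 = r.v x
      ring
  inv_mul_cancel r := by
    refine G.ext ?_ ?_ <;> funext x
    · show -r.u x + r.u x = 0
      ring
    · show (-r.v x + r.u x.1.1 * r.u x.1.2) + r.v x + -r.u x.1.1 * r.u x.1.2 = 0
      ring

@[simp] lemma mul_u {n : ℕ} (r s : G n) (i : Fin n) : (r * s).u i = r.u i + s.u i := rfl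
@[simp] lemma mul_v {n : ℕ} (r s : G n) (p : PairIdx n) :
    (r * s).v p = r.v p + s.v p + r.u p.1.1 * s.u p.1.2 := rfl
@[simp] lemma one_u {n : ℕ} (i : Fin n) : (1 : G n).u i = 0 := rfl
@[simp] lemma one_v {n : ℕ} (p : PairIdx n) : (1 : G n).v p = 0 := rfl
@[simp] lemma inv_u {n : ℕ} (r : G n) (i : Fin n) : (r⁻¹).u i = -r.u i := rfl
@[simp] lemma inv_v {n : ℕ} (r : G n) (p : PairIdx n) :
    (r⁻¹).v p = -r.v p + r.u p.1.1 * r.u p.1.2 := rfl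

end G

/-- First-block coordinate `r_i`. -/
def uc {n : ℕ} (r : G n) (i : Fin n) : ℤ := r.u i

/-- Second-block coordinate `r_{jk}` (zero unless `j < k`). -/
def vc {n : ℕ} (r : G n) (j k : Fin n) : ℤ := if h : j < k then r.v ⟨(j, k), h⟩ else 0

/-- A multiplier (2-cocycle with values in the circle group) of a group. -/
def IsMultiplier {Γ : Type*} [Group Γ] (σ : Γ → Γ → Circle) : Prop :=
  (∀ r s t : Γ, σ r s * σ (r * s) t = σ r (s * t) * σ s t) ∧
  ∀ r : Γ, σ r 1 = 1 ∧ σ 1 r = 1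

/-- Similarity (cohomology) of multipliers. -/
def Similar {Γ : Type*} [Group Γ] (σ τ : Γ → Γ → Circle) : Prop :=
  ∃ β : Γ → Circle, ∀ r s : Γ, τ r s = β r * β s * (β (r * s))⁻¹ * σ r s

/-- The subgroup `H(n) ≅ ℤⁿ` of `G n`: only the coordinates `r_n` and `r_{jn}` may
be nonzero. -/
def Hsub (n : ℕ) : Subgroup (G n) where
  carrier := {r | (∀ i : Fin n, (i : ℕ) + 1 < n → r.u i = 0) ∧
                  ∀ p : PairIdx n, (p.1.2 : ℕ) + 1 < n → r.v p = 0}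
  one_mem' := ⟨fun _ _ => rfl, fun _ _ => rfl⟩
  mul_mem' := by
    rintro r s ⟨hr1, hr2⟩ ⟨hs1, hs2⟩
    refine ⟨fun i hi => ?_, fun p hp => ?_⟩
    · simp [hr1 i hi, hs1 i hi]
    · simp [hr2 p hp, hs2 p hp, hs1 p.1.2 hp]
  inv_mem' := by
    rintro r ⟨hr1, hr2⟩
    refine ⟨fun i hi => ?_, fun p hp => ?_⟩
    · simp [hr1 i hi]
    · simp [hr2 p hp, hr1 p.1.2 hp]

/-- The subgroup `G(n-1)` of `G n`: the coordinates `r_n` and `r_{jn}` vanish. -/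
def Gsub (n : ℕ) : Subgroup (G n) where
  carrier := {r | (∀ i : Fin n, (i : ℕ) + 1 = n → r.u i = 0) ∧
                  ∀ p : PairIdx n, (p.1.2 : ℕ) + 1 = n → r.v p = 0}
  one_mem' := ⟨fun _ _ => rfl, fun _ _ => rfl⟩
  mul_mem' := by
    rintro r s ⟨hr1, hr2⟩ ⟨hs1, hs2⟩
    refine ⟨fun i hi => ?_, fun p hp => ?_⟩
    · simp [hr1 i hi, hs1 i hi]
    · simp [hr2 p hp, hs2 p hp, hs1 p.1.2 hp]
  inv_mem' := by
    rintro r ⟨hr1, hr2⟩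
    refine ⟨fun i hi => ?_, fun p hp => ?_⟩
    · simp [hr1 i hi]
    · simp [hr2 p hp, hr1 p.1.2 hp]

lemma mem_Hsub_iff {n : ℕ} {r : G n} :
    r ∈ Hsub n ↔ (∀ i : Fin n, (i : ℕ) + 1 < n → r.u i = 0) ∧
      ∀ p : PairIdx n, (p.1.2 : ℕ) + 1 < n → r.v p = 0 := Iff.rfl

lemma mem_Gsub_iff {n : ℕ} {r : G n} :
    r ∈ Gsub n ↔ (∀ i : Fin n, (i : ℕ) + 1 = n → r.u i = 0) ∧
      ∀ p : PairIdx n, (p.1.2 : ℕ) + 1 = n → r.v p = 0 := Iff.rfl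

/-- `H(n)` is a normal subgroup; conjugation preserves it. -/
lemma conj_mem_Hsub {n : ℕ} (s : G n) {a : G n} (ha : a ∈ Hsub n) :
    s * a * s⁻¹ ∈ Hsub n := by
  obtain ⟨ha1, ha2⟩ := ha
  refine ⟨fun i hi => ?_, fun p hp => ?_⟩
  · simp [ha1 i hi]
  · have hj : (p.1.1 : ℕ) + 1 < n := by
      have h2 : (p.1.1 : ℕ) < (p.1.2 : ℕ) := p.2
      omega
    simp [ha2 p hp, ha1 p.1.2 hp, ha1 p.1.1 hj]

/-- The action `α_b(a) = b a b⁻¹` of `G(n-1)` on `H(n)`. -/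
def conjH {n : ℕ} (b : Gsub n) (a : Hsub n) : Hsub n :=
  ⟨(b : G n) * (a : G n) * (b : G n)⁻¹, conj_mem_Hsub _ a.2⟩

/-- The `H(n)`-part of the unique factorization `r = a·b`, `a ∈ H(n)`, `b ∈ G(n-1)`. -/
def hpart {n : ℕ} (r : G n) : Hsub n :=
  ⟨⟨fun i => if (i : ℕ) + 1 = n then r.u i else 0,
    fun p => if (p.1.2 : ℕ) + 1 = n then r.v p else 0⟩, by
    refine ⟨fun i hi => ?_, fun p hp => ?_⟩
    · exact if_neg (by omega)
    · exact if_neg (by omega)⟩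

/-- The `G(n-1)`-part of the unique factorization `r = a·b`. -/
def gpart {n : ℕ} (r : G n) : Gsub n :=
  ⟨⟨fun i => if (i : ℕ) + 1 = n then 0 else r.u i,
    fun p => if (p.1.2 : ℕ) + 1 = n then 0 else r.v p⟩, by
    refine ⟨fun i hi => ?_, fun p hp => ?_⟩
    · exact if_pos hi
    · exact if_pos hp⟩

/-- `r` indeed factors as `hpart r * gpart r`. -/
lemma hpart_mul_gpart {n : ℕ} (r : G n) : ((hpart r : G n)) * (gpart r : G n) = r := by
  refine G.ext ?_ ?_ <;> funext x
  · show (if ((x : ℕ)) + 1 = n then r.u x else 0) + (if (x : ℕ) + 1 = n then 0 else r.u x) = r.u x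
    split <;> ring
  · show (if ((x.1.2 : ℕ)) + 1 = n then r.v x else 0) +
      (if (x.1.2 : ℕ) + 1 = n then 0 else r.v x) +
      (if ((x.1.1 : ℕ)) + 1 = n then r.u x.1.1 else 0) *
        (if (x.1.2 : ℕ) + 1 = n then 0 else r.u x.1.2) = r.v x
    have h2 : (x.1.1 : ℕ) < (x.1.2 : ℕ) := x.2
    have h3 : (x.1.2 : ℕ) < n := x.1.2.isLt
    rcases eq_or_ne ((x.1.2 : ℕ) + 1) n with h | h
    · rw [if_pos h, if_pos h, if_pos h, if_neg (by omega)]; ring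
    · rw [if_neg h, if_neg h, if_neg h, if_neg (show ¬((x.1.1 : ℕ) + 1 = n) by omega)]
      ring

/-- An admissible pair `(σ_H, g)` (Mackey data with trivial multiplier on `G(n-1)`). -/
structure AdmissiblePair (n : ℕ) (σH : Hsub n → Hsub n → Circle)
    (g : Hsub n → Gsub n → Circle) : Prop where
  multH : IsMultiplier σH
  g_one_right : ∀ a : Hsub n, g a 1 = 1
  g_one_left : ∀ b : Gsub n, g 1 b = 1
  g_add : ∀ (a a' : Hsub n) (b : Gsub n),
    g (a * a') b = σH (conjH b a) (conjH b a') * (σH a a')⁻¹ * (g a b * g a' b)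
  g_mul : ∀ (a : Hsub n) (b b' : Gsub n), g a (b * b') = g (conjH b' a) b * g a b'

/-- An admissible triple `(σ_H, g, σ')`. -/
def AdmissibleTriple (n : ℕ) (σH : Hsub n → Hsub n → Circle)
    (g : Hsub n → Gsub n → Circle) (σ' : Gsub n → Gsub n → Circle) : Prop :=
  AdmissiblePair n σH g ∧ IsMultiplier σ'

/-- The map `σ_n(a′b, ab′) = σ_H(a′, α_b(a)) g(a,b) σ′(b,b′)` defined via the unique
factorizations. -/
noncomputable def sigmaN {n : ℕ} (σH : Hsub n → Hsub n → Circle) (g : Hsub n → Gsub n → Circle)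
    (σ' : Gsub n → Gsub n → Circle) (r s : G n) : Circle :=
  σH (hpart r) (conjH (gpart r) (hpart s)) * g (hpart s) (gpart r) *
    σ' (gpart r) (gpart s)

/-- The map `τ(a′b, ab′) = σ_H(a′, α_b(a)) g(a,b)` defined via the unique factorizations. -/
noncomputable def tauN {n : ℕ} (σH : Hsub n → Hsub n → Circle) (g : Hsub n → Gsub n → Circle)
    (r s : G n) : Circle :=
  σH (hpart r) (conjH (gpart r) (hpart s)) * g (hpart s) (gpart r)

/-- The generator `u_i`. -/
def uE {n : ℕ} (i : Fin n) : G n := ⟨fun j => if j = i then 1 else 0, fun _ => 0⟩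

/-- The generator `v_{jk}`. -/
def vE {n : ℕ} (j k : Fin n) : G n := ⟨fun _ => 0, fun p => if p.1 = (j, k) then 1 else 0⟩

/-- The last index `n` (i.e. `n-1` in `Fin n`). -/
def lastI (n : ℕ) (hn : 0 < n) : Fin n := ⟨n - 1, by omega⟩

/-- `u_n` as an element of `H(n)`. -/
def unH {n : ℕ} (hn : 0 < n) : Hsub n :=
  ⟨uE (lastI n hn), by
    refine ⟨fun i hi => ?_, fun p hp => rfl⟩
    have h : i ≠ lastI n hn := by
      intro h; apply absurd hi; rw [h]; show ¬ (n - 1) + 1 < n; omega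
    simp [uE, h]⟩

/-- `u_i` (for `i < n`) as an element of `G(n-1)`. -/
def uiG {n : ℕ} (i : Fin n) (hi : (i : ℕ) + 1 < n) : Gsub n :=
  ⟨uE i, by
    refine ⟨fun j hj => ?_, fun p hp => rfl⟩
    have h : j ≠ i := by intro h; rw [h] at hj; omega
    simp [uE, h]⟩

/-- `v_{in}` (for `i < n`) as an element of `H(n)`. -/
def vinH {n : ℕ} (i : Fin n) (hi : (i : ℕ) + 1 < n) : Hsub n :=
  ⟨vE i (lastI n (by omega)), by
    refine ⟨fun j hj => rfl, fun p hp => ?_⟩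
    have h : p.1 ≠ (i, lastI n (by omega)) := by
      intro h
      have h2 : (p.1.2 : ℕ) = n - 1 := by rw [h]; rfl
      omega
    simp [vE, h]⟩

/-- `v_{ij}` (for `j < n`) as an element of `G(n-1)`. -/
def vijG {n : ℕ} (i j : Fin n) (hj : (j : ℕ) + 1 < n) : Gsub n :=
  ⟨vE i j, by
    refine ⟨fun k hk => rfl, fun p hp => ?_⟩
    have h : p.1 ≠ (i, j) := by
      intro h
      have h2 : (p.1.2 : ℕ) = (j : ℕ) := by rw [h]
      omega
    simp [vE, h]⟩

/-- The "word part" `w(a)` of `a ∈ H(n)`. -/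
def wH {n : ℕ} (a : Hsub n) : Hsub n :=
  ⟨⟨(a : G n).u, fun _ => 0⟩,
    ⟨fun i hi => (mem_Hsub_iff.mp a.2).1 i hi, fun _ _ => rfl⟩⟩

/-- The "central part" `z(a)` of `a ∈ H(n)`. -/
def zH {n : ℕ} (a : Hsub n) : Hsub n :=
  ⟨⟨fun _ => 0, (a : G n).v⟩,
    ⟨fun _ _ => rfl, fun p hp => (mem_Hsub_iff.mp a.2).2 p hp⟩⟩

/-- The "word part" `w(b)` of `b ∈ G(n-1)`. -/
def wG {n : ℕ} (b : Gsub n) : Gsub n :=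
  ⟨⟨(b : G n).u, fun _ => 0⟩,
    ⟨fun i hi => (mem_Gsub_iff.mp b.2).1 i hi, fun _ _ => rfl⟩⟩

/-- The "central part" `z(b)` of `b ∈ G(n-1)`. -/
def zG {n : ℕ} (b : Gsub n) : Gsub n :=
  ⟨⟨fun _ => 0, (b : G n).v⟩,
    ⟨fun _ _ => rfl, fun p hp => (mem_Gsub_iff.mp b.2).2 p hp⟩⟩

/-- `g(v_{in}, u_j)`, as a total function (equal to `1` outside the admissible range). -/
noncomputable def gvu {n : ℕ} (g : Hsub n → Gsub n → Circle) (i j : Fin n) : Circle :=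
  if h : (i : ℕ) + 1 < n ∧ (j : ℕ) + 1 < n then g (vinH i h.1) (uiG j h.2) else 1

/-- `g(u_n, v_{ij})`, as a total function (equal to `1` outside the admissible range). -/
noncomputable def guv {n : ℕ} (g : Hsub n → Gsub n → Circle) (i j : Fin n) : Circle :=
  if h : (j : ℕ) + 1 < n then g (unH (by omega)) (vijG i j h) else 1

/-- A normalized pair `(σ_H, g)`: admissible, with `σ_H` of the standard `λ`-form, and
`g(u_n, u_i) = 1` for all `1 ≤ i ≤ n-1`. -/
def Normalized {n : ℕ} (hn : 0 < n) (σH : Hsub n → Hsub n → Circle)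
    (g : Hsub n → Gsub n → Circle) (lam : Fin n → Circle) : Prop :=
  AdmissiblePair n σH g ∧
  (∀ a' a : Hsub n, σH a' a =
    ∏ i ∈ Finset.univ.filter (fun i : Fin n => (i : ℕ) + 1 < n),
      lam i ^ (uc (a' : G n) (lastI n hn) * vc (a : G n) i (lastI n hn))) ∧
  ∀ (i : Fin n) (hi : (i : ℕ) + 1 < n), g (unH hn) (uiG i hi) = 1

/-- The multiplier `σ_λ` of `G n` attached to a family of parameters
`λ_{i,jk} ∈ 𝕋` (`1 ≤ i ≤ k`, `1 ≤ j < k ≤ n`). -/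
noncomputable def sigmaLam {n : ℕ} (lam : Fin n → Fin n → Fin n → Circle) (r s : G n) : Circle :=
  (∏ t ∈ Finset.univ.filter
      (fun t : Fin n × Fin n × Fin n => t.1 < t.2.1 ∧ t.2.1 < t.2.2),
    lam t.1 t.2.1 t.2.2 ^ (vc s t.2.1 t.2.2 * uc r t.1 + uc s t.2.2 * vc r t.1 t.2.1) *
    lam t.2.1 t.1 t.2.2 ^ (vc s t.1 t.2.2 * uc r t.2.1 +
      uc s t.2.2 * (uc r t.1 * uc r t.2.1 - vc r t.1 t.2.1))) *
  ∏ p ∈ Finset.univ.filter (fun p : Fin n × Fin n => p.1 < p.2),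
    lam p.1 p.1 p.2 ^ (vc s p.1 p.2 * uc r p.1 +
      uc s p.2 * (uc r p.1 * (uc r p.1 - 1) / 2)) *
    lam p.2 p.1 p.2 ^ (uc r p.2 * (vc s p.1 p.2 + uc r p.1 * uc s p.2) +
      uc r p.1 * (uc s p.2 * (uc s p.2 - 1) / 2))

/-- The extension of the parameter family to indices `i > k`, via
`λ_{k,ij} = λ_{i,jk}⁻¹ λ_{j,ik}` for `i < j < k`. -/
noncomputable def lamExt {n : ℕ} (lam : Fin n → Fin n → Fin n → Circle) (i j k : Fin n) : Circle :=
  if i ≤ k then lam i j k else (lam j k i)⁻¹ * lam k j i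

/-!
Restricting `σ_n` to `G(n-1) × G(n-1)`, `H(n) × H(n)` and `G(n-1) × H(n)` recovers `σ'`, `σ_H`
and `g`, while `σ_n(a, b) = 1` for `a ∈ H(n)`, `b ∈ G(n-1)`. Hence a function `B` on `G(n)` whose
coboundary relates two such multipliers satisfies `B(ab) = B(a)B(b)`, and its restrictions to
`G(n-1)` and `H(n)` give (i) and (ii). Conversely, `β'` for (i) and `β` for (ii) combine into
`B(ab) = β(a)⁻¹ β'(b)`, whose coboundary relates `σ_n` and `σ_n'`.
-/

section Similarity

variable {n : ℕ}

lemma disjoint_Hsub_Gsub : Disjoint (Hsub n) (Gsub n) := by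
  refine Subgroup.disjoint_def.mpr fun {r} ⟨hH₁, hH₂⟩ ⟨hG₁, hG₂⟩ => G.ext ?_ ?_ <;> funext x
  · rcases (show (x : ℕ) + 1 < n ∨ (x : ℕ) + 1 = n by omega) with h | h
    exacts [hH₁ x h, hG₁ x h]
  · rcases (show (x.1.2 : ℕ) + 1 < n ∨ (x.1.2 : ℕ) + 1 = n by omega) with h | h
    exacts [hH₂ x h, hG₂ x h]

lemma hpart_eq_and_gpart_eq {r : G n} {a : Hsub n} {b : Gsub n} (h : (a : G n) * b = r) :
    hpart r = a ∧ gpart r = b :=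
  Prod.ext_iff.mp <| Subgroup.mul_injective_of_disjoint disjoint_Hsub_Gsub
    (a₁ := (hpart r, gpart r)) (a₂ := (a, b)) ((hpart_mul_gpart r).trans h.symm)

lemma hpart_coe_mul_coe (a : Hsub n) (b : Gsub n) : hpart ((a : G n) * (b : G n)) = a :=
  (hpart_eq_and_gpart_eq rfl).1

lemma gpart_coe_mul_coe (a : Hsub n) (b : Gsub n) : gpart ((a : G n) * (b : G n)) = b :=
  (hpart_eq_and_gpart_eq rfl).2

lemma coe_mul_coe_eq_conjH_mul (b : Gsub n) (a : Hsub n) :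
    (b : G n) * a = (conjH b a : G n) * b := by
  simp [conjH]

lemma hpart_mul_and_gpart_mul (r s : G n) :
    hpart (r * s) = hpart r * conjH (gpart r) (hpart s) ∧ gpart (r * s) = gpart r * gpart s := by
  refine hpart_eq_and_gpart_eq ?_
  conv_rhs => rw [← hpart_mul_gpart r, ← hpart_mul_gpart s]
  simp only [Subgroup.coe_mul, conjH]
  group

lemma conjH_one_right (b : Gsub n) : conjH b 1 = 1 :=
  Subtype.ext (by simp [conjH])

lemma conjH_one_left (a : Hsub n) : conjH 1 a = a :=
  Subtype.ext (by simp [conjH])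

section sigmaN

variable (σH : Hsub n → Hsub n → Circle) (g : Hsub n → Gsub n → Circle)
  (σ' : Gsub n → Gsub n → Circle)

lemma sigmaN_coe_mul_coe (a a' : Hsub n) (b b' : Gsub n) :
    sigmaN σH g σ' ((a : G n) * (b : G n)) ((a' : G n) * (b' : G n)) =
      σH a (conjH b a') * g a' b * σ' b b' := by
  simp only [sigmaN, hpart_coe_mul_coe, gpart_coe_mul_coe]

variable {σH g σ'}

lemma sigmaN_coe_Hsub_coe_Gsub (h : AdmissibleTriple n σH g σ') (a : Hsub n) (b : Gsub n) :
    sigmaN σH g σ' a b = 1 := by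
  simpa [conjH_one_right, (h.1.multH.2 a).1, h.1.g_one_left, (h.2.2 b).2] using
    sigmaN_coe_mul_coe σH g σ' a 1 1 b

lemma sigmaN_coe_Hsub_coe_Hsub (h : AdmissibleTriple n σH g σ') (a a' : Hsub n) :
    sigmaN σH g σ' a a' = σH a a' := by
  simpa [conjH_one_left, h.1.g_one_right, (h.2.2 1).1] using
    sigmaN_coe_mul_coe σH g σ' a a' 1 1

lemma sigmaN_coe_Gsub_coe_Hsub (h : AdmissibleTriple n σH g σ') (b : Gsub n) (a : Hsub n) :
    sigmaN σH g σ' b a = g a b := by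
  simpa [(h.1.multH.2 _).2, (h.2.2 b).1] using sigmaN_coe_mul_coe σH g σ' 1 a b 1

lemma sigmaN_coe_Gsub_coe_Gsub (h : AdmissiblePair n σH g) (b b' : Gsub n) :
    sigmaN σH g σ' b b' = σ' b b' := by
  simpa [conjH_one_right, (h.multH.2 1).1, h.g_one_left] using
    sigmaN_coe_mul_coe σH g σ' 1 1 b b'

end sigmaN

lemma Similar.restrict {Γ : Type*} [Group Γ] {σ τ : Γ → Γ → Circle} (h : Similar σ τ)
    (K : Subgroup Γ) : Similar (fun x y : K => σ x y) (fun x y : K => τ x y) :=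
  let ⟨β, hβ⟩ := h
  ⟨fun x => β x, fun x y => hβ x y⟩

/-- Condition (ii) of the similarity criterion. -/
def PairSimilar (σH : Hsub n → Hsub n → Circle) (g : Hsub n → Gsub n → Circle)
    (σH' : Hsub n → Hsub n → Circle) (g' : Hsub n → Gsub n → Circle) : Prop :=
  ∃ β : Hsub n → Circle,
    (∀ a a' : Hsub n, σH' a a' = (β a)⁻¹ * (β a')⁻¹ * β (a * a') * σH a a') ∧
    ∀ (a : Hsub n) (b : Gsub n), g' a b = β (conjH b a) * (β a)⁻¹ * g a b

variable {σH σH' : Hsub n → Hsub n → Circle} {g g' : Hsub n → Gsub n → Circle}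
  {σ₁ σ₂ : Gsub n → Gsub n → Circle}

lemma similar_sigmaN_of_similar (hσ : Similar σ₁ σ₂) (hpair : PairSimilar σH g σH' g') :
    Similar (sigmaN σH g σ₁) (sigmaN σH' g' σ₂) := by
  obtain ⟨β₁, hβ₁⟩ := hσ
  obtain ⟨β, hσH, hg⟩ := hpair
  refine ⟨fun r => (β (hpart r))⁻¹ * β₁ (gpart r), fun r s => ?_⟩
  obtain ⟨hpart_rs, gpart_rs⟩ := hpart_mul_and_gpart_mul r s
  simp only [sigmaN, hσH, hg, hβ₁, hpart_rs, gpart_rs]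
  ext; push_cast; field_simp

lemma similar_of_similar_sigmaN (h1 : AdmissiblePair n σH g) (h2 : AdmissiblePair n σH' g')
    (h : Similar (sigmaN σH g σ₁) (sigmaN σH' g' σ₂)) : Similar σ₁ σ₂ := by
  simpa only [sigmaN_coe_Gsub_coe_Gsub h1, sigmaN_coe_Gsub_coe_Gsub h2] using h.restrict (Gsub n)

lemma map_coe_mul_coe_of_sigmaN_eq (h1 : AdmissibleTriple n σH g σ₁)
    (h2 : AdmissibleTriple n σH' g' σ₂) {B : G n → Circle}
    (hB : ∀ r s, sigmaN σH' g' σ₂ r s = B r * B s * (B (r * s))⁻¹ * sigmaN σH g σ₁ r s)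
    (a : Hsub n) (b : Gsub n) : B ((a : G n) * (b : G n)) = B a * B b := by
  have hab := hB a b
  rw [sigmaN_coe_Hsub_coe_Gsub h1, sigmaN_coe_Hsub_coe_Gsub h2, mul_one] at hab
  exact (mul_inv_eq_one.mp hab.symm).symm

lemma pairSimilar_of_similar_sigmaN (h1 : AdmissibleTriple n σH g σ₁)
    (h2 : AdmissibleTriple n σH' g' σ₂) (h : Similar (sigmaN σH g σ₁) (sigmaN σH' g' σ₂)) :
    PairSimilar σH g σH' g' := by
  obtain ⟨B, hB⟩ := h
  refine ⟨fun a => (B a)⁻¹, fun a a' => ?_, fun a b => ?_⟩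
  · have haa' := hB a a'
    rw [sigmaN_coe_Hsub_coe_Hsub h1, sigmaN_coe_Hsub_coe_Hsub h2] at haa'
    simp only [haa', inv_inv, Subgroup.coe_mul]
  · have hba := hB b a
    rw [sigmaN_coe_Gsub_coe_Hsub h1, sigmaN_coe_Gsub_coe_Hsub h2, coe_mul_coe_eq_conjH_mul,
      map_coe_mul_coe_of_sigmaN_eq h1 h2 hB] at hba
    rw [hba]
    ext; push_cast; field_simp

end Similarity

theorem sigmaN_similar_iff_general (n : ℕ)
    (σH σH' : Hsub n → Hsub n → Circle) (g g' : Hsub n → Gsub n → Circle)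
    (σ₁ σ₂ : Gsub n → Gsub n → Circle)
    (h1 : AdmissibleTriple n σH g σ₁) (h2 : AdmissibleTriple n σH' g' σ₂) :
    Similar (sigmaN σH g σ₁) (sigmaN σH' g' σ₂) ↔
      (Similar σ₁ σ₂ ∧
        ∃ β : Hsub n → Circle,
          (∀ a a' : Hsub n, σH' a a' = (β a)⁻¹ * (β a')⁻¹ * β (a * a') * σH a a') ∧
          ∀ (a : Hsub n) (b : Gsub n), g' a b = β (conjH b a) * (β a)⁻¹ * g a b) :=
  ⟨fun h => ⟨similar_of_similar_sigmaN h1.1 h2.1 h, pairSimilar_of_similar_sigmaN h1 h2 h⟩,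
    fun ⟨hσ, hpair⟩ => similar_sigmaN_of_similar hσ hpair⟩

/-- similarity criterion for the multipliers associated with two
admissible triples. -/
theorem sigmaN_similar_iff (n : ℕ) (hn : 2 ≤ n)
    (σH σH' : Hsub n → Hsub n → Circle) (g g' : Hsub n → Gsub n → Circle)
    (σ₁ σ₂ : Gsub n → Gsub n → Circle)
    (h1 : AdmissibleTriple n σH g σ₁) (h2 : AdmissibleTriple n σH' g' σ₂) :
    Similar (sigmaN σH g σ₁) (sigmaN σH' g' σ₂) ↔
      (Similar σ₁ σ₂ ∧
        ∃ β : Hsub n → Circle,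
          (∀ a a' : Hsub n, σH' a a' = (β a)⁻¹ * (β a')⁻¹ * β (a * a') * σH a a') ∧
          ∀ (a : Hsub n) (b : Gsub n), g' a b = β (conjH b a) * (β a)⁻¹ * g a b) :=
  sigmaN_similar_iff_general n σH σH' g g' σ₁ σ₂ h1 h2

end FreeNilp
end

section
/- Let n ≥ 2 and let (σ_H, g) be a normalized pair. Then g(a, b) = g(w(a), w(b)) · g(w(a), z(b)) · g(z(a), w(b)) for all a ∈ H(n) and b ∈ G(n−1). -/
open scoped BigOperators

namespace FreeNilp

/-! Elements of `G n` with vanishing first block are central, so `z(a)` and `z(b)` are fixed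
by the action and `g` is multiplicative in each variable along the splittings `a = w(a) z(a)`,
`b = w(b) z(b)`; splitting `a` costs no multiplier because `σ_H` sees only `a′_n` in its first
argument, which the action fixes. What remains is `g(z(a), z(b)) = 1`: `b ↦ g(z(a), b)` is a
character of `G(n-1)`, and the central elements of `G(n-1)` are generated by the commutators
`⁅u_j, u_k⁆ = v_{jk}`. -/

section Decomposition

variable {n : ℕ}

open scoped commutatorElement

lemma G.commute_of_u_eq_zero {r : G n} (hr : ∀ i, r.u i = 0) (s : G n) : Commute r s := by
  refine G.ext (funext fun i => ?_) (funext fun p => ?_)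
  · simp only [G.mul_u]
    ring
  · simp only [G.mul_v, hr]
    ring

lemma conjH_eq_self_of_u_eq_zero_left (b : Gsub n) (a : Hsub n) (hb : ∀ i, (b : G n).u i = 0) :
    conjH b a = a :=
  Subtype.ext (G.commute_of_u_eq_zero hb _).mul_inv_cancel

lemma conjH_eq_self_of_u_eq_zero_right (b : Gsub n) (a : Hsub n) (ha : ∀ i, (a : G n).u i = 0) :
    conjH b a = a :=
  Subtype.ext (G.commute_of_u_eq_zero ha _).symm.mul_inv_cancel

lemma conjH_u (b : Gsub n) (a : Hsub n) (i : Fin n) :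
    ((conjH b a : Hsub n) : G n).u i = (a : G n).u i := by
  show (b : G n).u i + (a : G n).u i + -(b : G n).u i = (a : G n).u i
  ring

lemma wH_mul_zH (a : Hsub n) : wH a * zH a = a := by
  refine Subtype.ext (G.ext (funext fun i => ?_) (funext fun p => ?_))
  · exact add_zero _
  · show 0 + (a : G n).v p + (a : G n).u p.1.1 * 0 = (a : G n).v p
    ring

lemma wG_mul_zG (b : Gsub n) : wG b * zG b = b := by
  refine Subtype.ext (G.ext (funext fun i => ?_) (funext fun p => ?_))
  · exact add_zero _
  · show 0 + (b : G n).v p + (b : G n).u p.1.1 * 0 = (b : G n).v p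
    ring

lemma commutatorElement_uE {i j : Fin n} (hij : i < j) : ⁅uE i, uE j⁆ = vE i j := by
  rw [commutatorElement_def]
  refine G.ext (funext fun k => ?_) (funext fun p => ?_)
  · simp only [G.mul_u, G.inv_u, uE, vE]
    ring
  · obtain ⟨⟨k, l⟩, hkl : k < l⟩ := p
    simp only [G.mul_v, G.mul_u, G.inv_v, G.inv_u, uE, vE, Prod.mk.injEq]
    have : ¬(k = j ∧ l = i) := fun ⟨hk, hl⟩ => lt_asymm hij (hk ▸ hl ▸ hkl)
    split_ifs <;> simp_all

/-- The central element of `G(n-1)` with second block `c`, its entries `c_{jn}` discarded. -/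
def centralG (c : PairIdx n → ℤ) : Gsub n :=
  ⟨⟨0, fun p => if (p.1.2 : ℕ) + 1 = n then 0 else c p⟩, fun _ _ => rfl, fun _ hp => if_pos hp⟩

lemma centralG_add (c d : PairIdx n → ℤ) : centralG (c + d) = centralG c * centralG d := by
  refine Subtype.ext (G.ext (funext fun i => (add_zero 0).symm) (funext fun p => ?_))
  show (if (p.1.2 : ℕ) + 1 = n then 0 else c p + d p) =
    (if (p.1.2 : ℕ) + 1 = n then 0 else c p) + (if (p.1.2 : ℕ) + 1 = n then 0 else d p) + 0 * 0
  split_ifs <;> ring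

lemma eq_centralG_of_u_eq_zero (r : Gsub n) (hr : ∀ i, (r : G n).u i = 0) :
    r = centralG (r : G n).v := by
  refine Subtype.ext (G.ext (funext hr) (funext fun p => ?_))
  show (r : G n).v p = if (p.1.2 : ℕ) + 1 = n then 0 else (r : G n).v p
  split_ifs with hp
  · exact (mem_Gsub_iff.mp r.2).2 p hp
  · rfl

lemma centralG_single_of_not_lt {p : PairIdx n} (hp : ¬(p.1.2 : ℕ) + 1 < n) :
    centralG (Pi.single p 1) = 1 := by
  refine Subtype.ext (G.ext rfl (funext fun q => ?_))
  show (if (q.1.2 : ℕ) + 1 = n then 0 else Pi.single p 1 q) = 0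
  rcases eq_or_ne q p with rfl | hqp
  · exact if_pos (by have := q.1.2.isLt; omega)
  · simp [hqp]

lemma centralG_single_of_lt {p : PairIdx n} (hp : (p.1.2 : ℕ) + 1 < n) :
    centralG (Pi.single p 1) =
      ⁅uiG p.1.1 (lt_trans (Nat.succ_lt_succ p.2) hp), uiG p.1.2 hp⁆ := by
  refine Subtype.ext ?_
  show _ = ⁅uE p.1.1, uE p.1.2⁆
  rw [commutatorElement_uE p.2]
  refine G.ext rfl (funext fun q => ?_)
  show (if (q.1.2 : ℕ) + 1 = n then 0 else Pi.single p 1 q) = if q.1 = p.1 then 1 else 0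
  rcases eq_or_ne q p with rfl | hqp
  · simp [hp.ne]
  · simp [hqp, Subtype.val_injective.ne hqp]

lemma map_eq_one_of_u_eq_zero {M : Type*} [CommGroup M] (χ : Gsub n →* M) (r : Gsub n)
    (hr : ∀ i, (r : G n).u i = 0) : χ r = 1 := by
  let f : (PairIdx n → ℤ) →+ Additive M :=
    AddMonoidHom.mk' (fun c => Additive.ofMul (χ (centralG c)))
      (fun c d => by rw [centralG_add, map_mul, ofMul_mul])
  have hf : f = 0 := by
    ext p
    by_cases hp : (p.1.2 : ℕ) + 1 < n
    · simp [f, centralG_single_of_lt hp, map_commutatorElement,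
        commutatorElement_eq_one_iff_commute, Commute.all]
    · simp [f, centralG_single_of_not_lt hp]
  rw [eq_centralG_of_u_eq_zero r hr]
  exact congrArg Additive.toMul (DFunLike.congr_fun hf _)

lemma sigma_conjH_left {hn : 0 < n} {lam : Fin n → Circle} {σH : Hsub n → Hsub n → Circle}
    (hσ : ∀ a' a : Hsub n, σH a' a =
      ∏ i ∈ Finset.univ.filter (fun i : Fin n => (i : ℕ) + 1 < n),
        lam i ^ (uc (a' : G n) (lastI n hn) * vc (a : G n) i (lastI n hn)))
    (b : Gsub n) (a a' : Hsub n) : σH (conjH b a) a' = σH a a' := by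
  simp only [hσ, uc, conjH_u]

namespace AdmissiblePair

variable {σH : Hsub n → Hsub n → Circle} {g : Hsub n → Gsub n → Circle}
  (pair : AdmissiblePair n σH g)
include pair

lemma g_mul_left {a a' : Hsub n} {b : Gsub n}
    (h : σH (conjH b a) (conjH b a') = σH a a') : g (a * a') b = g a b * g a' b := by
  rw [pair.g_add, h, mul_inv_cancel, one_mul]

lemma g_mul_right {a : Hsub n} {b b' : Gsub n} (h : conjH b' a = a) :
    g a (b * b') = g a b * g a b' := by
  rw [pair.g_mul, h]

lemma g_eq_one_of_u_eq_zero {a : Hsub n} {b : Gsub n} (ha : ∀ i, (a : G n).u i = 0)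
    (hb : ∀ i, (b : G n).u i = 0) : g a b = 1 :=
  map_eq_one_of_u_eq_zero
    (MonoidHom.mk' (g a) fun _ _ => pair.g_mul_right (conjH_eq_self_of_u_eq_zero_right _ _ ha))
    b hb

end AdmissiblePair

end Decomposition

/-- decomposition of `g` along the `w`- and `z`-parts. -/
theorem g_decomposition (n : ℕ) (hn : 2 ≤ n) (lam : Fin n → Circle)
    (σH : Hsub n → Hsub n → Circle) (g : Hsub n → Gsub n → Circle)
    (hnorm : Normalized (show 0 < n by omega) σH g lam) :
    ∀ (a : Hsub n) (b : Gsub n),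
      g a b = g (wH a) (wG b) * g (wH a) (zG b) * g (zH a) (wG b) := by
  obtain ⟨pair, hσ, -⟩ := hnorm
  intro a b
  have split_a : g a b = g (wH a) b * g (zH a) b := by
    conv_lhs => rw [← wH_mul_zH a]
    refine pair.g_mul_left ?_
    rw [conjH_eq_self_of_u_eq_zero_right b (zH a) fun _ => rfl, sigma_conjH_left hσ]
  have split_b : ∀ a' : Hsub n, g a' b = g a' (wG b) * g a' (zG b) := fun a' => by
    conv_lhs => rw [← wG_mul_zG b]
    exact pair.g_mul_right (conjH_eq_self_of_u_eq_zero_left _ _ fun _ => rfl)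
  have central : g (zH a) (zG b) = 1 :=
    pair.g_eq_one_of_u_eq_zero (fun _ => rfl) (fun _ => rfl)
  rw [split_a, split_b (wH a), split_b (zH a), central, mul_one]

end FreeNilp
end
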